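/- Let t > 0 be such that Γ_K · 𝔇_t = H. Then there exists R₀ > 0 with the following property: whenever h = h(x₁,x₂,y₁,y₂,θ₁,θ₂) and h' = h(x₁',x₂',y₁',y₂',θ₁',θ₂') both lie in 𝔇_t, 𝓛h = 𝓛h', and 𝓛h contains no point of some open Euclidean ball of radius R ≥ R₀, then θ₁ = θ₁', θ₂ = θ₂', and y₁/y₂ = λ^{4r}·(y₁'/y₂') for some r ∈ {−1, 0, 1}. If moreover h, h' ∈ 𝔇_t', then h = h'. -/

import Mathlib

open MeasureTheory Matrix Set Pointwise

noncomputable section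

/-- The real embedding of `ℤ[√2]`, `a + b√2 ↦ a + b√2`. -/
def emb (α : Zsqrtd 2) : ℝ := (α.re : ℝ) + (α.im : ℝ) * Real.sqrt 2

/-- The Galois-conjugate embedding `σ`, `a + b√2 ↦ a − b√2`. -/
def embc (α : Zsqrtd 2) : ℝ := (α.re : ℝ) - (α.im : ℝ) * Real.sqrt 2

/-- The fundamental unit `λ = 1 + √2`. -/
def lam : ℝ := 1 + Real.sqrt 2

/-- `𝓛'`: the Minkowski embedding of `ℤ[√2]` in `ℝ²`. -/
def Lp : Set (ℝ × ℝ) := {p | ∃ α : Zsqrtd 2, p = (emb α, embc α)}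

/-- `v(β₁,β₂) = (β₁, β₂, σ(β₁), σ(β₂))`. -/
def latvec (β₁ β₂ : Zsqrtd 2) : Fin 4 → ℝ := ![emb β₁, emb β₂, embc β₁, embc β₂]

/-- `𝓛`: the Minkowski embedding of `ℤ[√2]²` in `ℝ⁴`. -/
def Lquad : Set (Fin 4 → ℝ) := {v | ∃ β₁ β₂ : Zsqrtd 2, v = latvec β₁ β₂}

/-- `𝓛h`, for a 4×4 real matrix `h` (row vectors, right multiplication). -/
def latimage (h : Matrix (Fin 4) (Fin 4) ℝ) : Set (Fin 4 → ℝ) :=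
  (fun v => Matrix.vecMul v h) '' Lquad

def nmat (x : ℝ) : Matrix (Fin 2) (Fin 2) ℝ := !![1, x; 0, 1]
def amat (y : ℝ) : Matrix (Fin 2) (Fin 2) ℝ := !![y, 0; 0, y⁻¹]
def kmat (θ : ℝ) : Matrix (Fin 2) (Fin 2) ℝ :=
  !![Real.cos θ, -Real.sin θ; Real.sin θ, Real.cos θ]

/-- Block diagonal 4×4 matrix from two 2×2 blocks. -/
def bd (A B : Matrix (Fin 2) (Fin 2) ℝ) : Matrix (Fin 4) (Fin 4) ℝ :=
  !![A 0 0, A 0 1, 0, 0;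
     A 1 0, A 1 1, 0, 0;
     0, 0, B 0 0, B 0 1;
     0, 0, B 1 0, B 1 1]

/-- `h(x₁,x₂,y₁,y₂,θ₁,θ₂) = diag(n(x₁)a(y₁)k(θ₁), n(x₂)a(y₂)k(θ₂))`. -/
def hmat (x₁ x₂ y₁ y₂ θ₁ θ₂ : ℝ) : Matrix (Fin 4) (Fin 4) ℝ :=
  bd (nmat x₁ * amat y₁ * kmat θ₁) (nmat x₂ * amat y₂ * kmat θ₂)

/-- `H = SL₂(ℝ)² ⊂ SL₄(ℝ)` (block diagonal). -/
def Hset : Set (Matrix (Fin 4) (Fin 4) ℝ) :=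
  {h | ∃ A B : Matrix (Fin 2) (Fin 2) ℝ, A.det = 1 ∧ B.det = 1 ∧ h = bd A B}

/-- `Γ_K = {diag(A, σ(A)) : A ∈ SL₂(ℤ[√2])}`. -/
def GammaK : Set (Matrix (Fin 4) (Fin 4) ℝ) :=
  {g | ∃ A : Matrix (Fin 2) (Fin 2) (Zsqrtd 2), A.det = 1 ∧ g = bd (A.map emb) (A.map embc)}

/-- `𝒲`: the open regular octagon of side length √2. -/
def Woct : Set (ℝ × ℝ) :=
  {p | |p.1| < lam / Real.sqrt 2 ∧ |p.2| < lam / Real.sqrt 2 ∧ |p.1| + |p.2| < lam}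

/-- `𝒲' = 𝒲 ∖ (√2−1)𝒲`. -/
def Wp : Set (ℝ × ℝ) := Woct \ ((Real.sqrt 2 - 1) • Woct)

/-- `θ̂ = 48√2/π⁴`, the density of visible points. -/
def thetaHat : ℝ := 48 * Real.sqrt 2 / Real.pi ^ 4

/-- `T(s)`: open triangle with vertices `(0,0)`, `(s/θ̂)^{1/2}(1,±1)`. -/
def Tset (s : ℝ) : Set (ℝ × ℝ) :=
  {p | 0 < p.1 ∧ p.1 < Real.sqrt (s / thetaHat) ∧ |p.2| < p.1}

/-- `𝔉`: a fundamental domain of `𝓛'`. -/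
def Fdom : Set (ℝ × ℝ) :=
  {p | ∃ r₁ ∈ Set.Ico (0:ℝ) 1, ∃ r₂ ∈ Set.Ico (0:ℝ) 1,
    p = (1 + r₁ + r₂ * Real.sqrt 2, 2 + r₁ - r₂ * Real.sqrt 2)}

/-- The Siegel domain `𝔇_t`. -/
def Dset (t : ℝ) : Set (Matrix (Fin 4) (Fin 4) ℝ) :=
  {h | ∃ x₁ x₂ y₁ y₂ θ₁ θ₂ : ℝ, (x₁, x₂) ∈ Fdom ∧ 0 < y₁ ∧ 0 < y₂ ∧ t ≤ y₁ * y₂ ∧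
    lam ^ (-2 : ℤ) ≤ y₁ / y₂ ∧ y₁ / y₂ ≤ lam ^ 2 ∧
    θ₁ ∈ Set.Ico 0 Real.pi ∧ θ₂ ∈ Set.Ico 0 Real.pi ∧ h = hmat x₁ x₂ y₁ y₂ θ₁ θ₂}

/-- Row vector times 2×2 matrix, on `ℝ × ℝ`. -/
def mul2 (p : ℝ × ℝ) (M : Matrix (Fin 2) (Fin 2) ℝ) : ℝ × ℝ :=
  (p.1 * M 0 0 + p.2 * M 1 0, p.1 * M 0 1 + p.2 * M 1 1)

/-- `r(s)`: the unique integer with `λ^{2r} ≤ s^{1/4} < λ^{2(r+1)}`. -/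
def rr (s : ℝ) : ℤ := ⌊Real.logb (lam ^ 2) (s ^ ((1:ℝ)/4))⌋

/-- `𝒯(s)` with explicit integer `r`: `λ^{−2r}T(s) × λ^{2r}𝒲`. -/
def calT (s : ℝ) (r : ℤ) : Set (Fin 4 → ℝ) :=
  {v | (lam ^ (2*r) * v 0, lam ^ (2*r) * v 1) ∈ Tset s ∧
       (lam ^ (-(2*r)) * v 2, lam ^ (-(2*r)) * v 3) ∈ Woct}

/-- `𝒯(s) = λ^{−2r(s)}T(s) × λ^{2r(s)}𝒲`. -/
def calTs (s : ℝ) : Set (Fin 4 → ℝ) := calT s (rr s)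

/-- Euclidean norm on `ℝ⁴`. -/
def enorm4 (v : Fin 4 → ℝ) : ℝ := Real.sqrt (∑ i, (v i) ^ 2)

/-- `𝓛h̃ = (ℤ(y₁,0,y₂,0) + ℤ√2(y₁,0,−y₂,0) + ℝ(0,1,0,0) + ℝ(0,0,0,1))·diag(k(θ₁),k(θ₂))`. -/
def Ltilde (y₁ y₂ θ₁ θ₂ : ℝ) : Set (Fin 4 → ℝ) :=
  {v | ∃ (m n : ℤ) (c₁ c₂ : ℝ),
    v = Matrix.vecMul ![((m:ℝ) + (n:ℝ) * Real.sqrt 2) * y₁, c₁,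
          ((m:ℝ) - (n:ℝ) * Real.sqrt 2) * y₂, c₂] (bd (kmat θ₁) (kmat θ₂))}

open Classical in
/-- Real-valued indicator of a proposition. -/
def ind (P : Prop) : ℝ := if P then 1 else 0

/-- `c_H = 3/π⁴`. -/
def cH : ℝ := 3 / Real.pi ^ 4

/-- `Y_t = {(y₁,y₂) : y₁,y₂ > 0, y₁y₂ ≥ t, y₁/y₂ ∈ (λ⁻²,λ²)}`. -/
def Yt (t : ℝ) : Set (ℝ × ℝ) :=
  {y | 0 < y.1 ∧ 0 < y.2 ∧ t ≤ y.1 * y.2 ∧ lam ^ (-2:ℤ) < y.1 / y.2 ∧ y.1 / y.2 < lam ^ 2}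

/-- The main term `G_M(s)` (depending on the Siegel-domain parameter `t`). -/
def GM (t s : ℝ) : ℝ :=
  cH * ∫ θ₂ in Set.Ico (0:ℝ) Real.pi, ∫ θ₁ in Set.Ico (0:ℝ) Real.pi, ∫ y in Yt t, ∫ x in Fdom,
    (y.1 ^ 3 * y.2 ^ 3)⁻¹ * ind (Ltilde y.1 y.2 θ₁ θ₂ ∩ calTs s = ∅)

/-- The error term `G_E(s)`. -/
def GE (t s : ℝ) : ℝ :=
  cH * ∫ θ₂ in Set.Ico (0:ℝ) Real.pi, ∫ θ₁ in Set.Ico (0:ℝ) Real.pi, ∫ y in Yt t, ∫ x in Fdom,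
    (y.1 ^ 3 * y.2 ^ 3)⁻¹ *
      ind (latimage (hmat x.1 x.2 y.1 y.2 θ₁ θ₂) ∩ calTs s = ∅ ∧
           (Ltilde y.1 y.2 θ₁ θ₂ ∩ calTs s).Nonempty)

/-- `J = [0,π/4] ∪ [3π/4,π)`. -/
def Jset : Set ℝ := Set.Icc 0 (Real.pi/4) ∪ Set.Ico (3*Real.pi/4) Real.pi

/-- `Y = {(y₁,y₂) : y₁ > 0, 1 < y₂ < λ²}`. -/
def Yset : Set (ℝ × ℝ) := {y | 0 < y.1 ∧ 1 < y.2 ∧ y.2 < lam ^ 2}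

/-- `T₁`: open triangle with vertices `(0,0)`, `(1,±1)`. -/
def T1 : Set (ℝ × ℝ) := {p | 0 < p.1 ∧ p.1 < 1 ∧ |p.2| < p.1}

/-- `ℓ₁(θ₁)`: first-coordinate projection of `θ̂^{−1/2}T₁k(−θ₁)`. -/
def ell1 (θ₁ : ℝ) : Set ℝ :=
  {x | ∃ p ∈ T1, x = (mul2 ((Real.sqrt thetaHat)⁻¹ • p) (kmat (-θ₁))).1}

/-- `ℓ₂(θ₂)`: first-coordinate projection of `𝒲k(−θ₂)`. -/
def ell2 (θ₂ : ℝ) : Set ℝ := {x | ∃ p ∈ Woct, x = (mul2 p (kmat (-θ₂))).1}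

/-- `C_𝒫 = 2304(2−√2)/π⁸`. -/
def CP : ℝ := 2304 * (2 - Real.sqrt 2) / Real.pi ^ 8

/-- `ζ_K(2) = π⁴/(48√2)`. -/
def zetaK2 : ℝ := Real.pi ^ 4 / (48 * Real.sqrt 2)

/-- `𝒯'(s) = T(s) × 𝒲`. -/
def Tprime (s : ℝ) : Set (Fin 4 → ℝ) :=
  {v | (v 0, v 1) ∈ Tset s ∧ (v 2, v 3) ∈ Woct}

/-- `L₁(θ₁)` from Lemma 3.4: projection of `λ^{−2r}T(s)k(−θ₁)` onto the x-axis. -/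
def L1set (s : ℝ) (r : ℤ) (θ₁ : ℝ) : Set ℝ :=
  {x | ∃ p ∈ Tset s, x = (mul2 ((lam ^ (-(2*r)) : ℝ) • p) (kmat (-θ₁))).1}

/-- `L₂(θ₂)`: projection of `λ^{2r}𝒲k(−θ₂)` onto the x-axis. -/
def L2set (r : ℤ) (θ₂ : ℝ) : Set ℝ :=
  {x | ∃ p ∈ Woct, x = (mul2 ((lam ^ (2*r) : ℝ) • p) (kmat (-θ₂))).1}

/-- `n(x)a(y)k(θ)` where `y,θ` are determined by `y⁻¹(sin θ, cos θ) = z`. -/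
def hz (z : ℝ × ℝ) (x : ℝ) : Matrix (Fin 2) (Fin 2) ℝ :=
  nmat x * amat (Real.sqrt (z.1 ^ 2 + z.2 ^ 2))⁻¹ *
    !![(Real.sqrt (z.1 ^ 2 + z.2 ^ 2))⁻¹ * z.2, -((Real.sqrt (z.1 ^ 2 + z.2 ^ 2))⁻¹ * z.1);
       (Real.sqrt (z.1 ^ 2 + z.2 ^ 2))⁻¹ * z.1, (Real.sqrt (z.1 ^ 2 + z.2 ^ 2))⁻¹ * z.2]

/-- The function `F₂` of Lemma 4.7. -/
def F2 (z₁ : ℝ) : ℝ :=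
  (24 / Real.pi ^ 4) * ∫ z₂ in Set.Ioo (-z₁) z₁, ∫ w in Wp, ∫ x in Fdom,
    ind (latimage (bd (hz (z₁, z₂) x.1) (hz w x.2)) ∩ Tprime (z₁ ^ 2 * thetaHat) = ∅)

/-- The box `B(α₃,α₄)`. -/
def Bbox (α₃ α₄ : Zsqrtd 2) (C₁ s : ℝ) : Set (ℝ × ℝ) :=
  {x | |x.1 + emb α₄ / emb α₃| ≤ C₁ / Real.sqrt s ∧
       |x.2 + embc α₄ / embc α₃| ≤ C₁ / Real.sqrt s}

/-- The matrix `h` determined by `s, z₂, w, x₁, x₂` via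
`y₁⁻¹(sin θ₁, cos θ₁) = λ^{−2r}(θ̂^{−1/2}s^{1/2}, z₂)`, `y₂⁻¹(sin θ₂, cos θ₂) = λ^{2r}w`. -/
def hfull (s z₂ : ℝ) (w : ℝ × ℝ) (x₁ x₂ : ℝ) : Matrix (Fin 4) (Fin 4) ℝ :=
  bd (hz ((lam ^ (-(2 * rr s)) : ℝ) • (Real.sqrt (s / thetaHat), z₂)) x₁)
     (hz ((lam ^ (2 * rr s) : ℝ) • w) x₂)

/-- `F⁺_{(α₃,α₄)}(s)`. -/
def Fplus (α₃ α₄ : Zsqrtd 2) (C₁ s : ℝ) : ℝ :=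
  (Real.sqrt s)⁻¹ * ∫ z₂ in Set.Ioo (0:ℝ) (Real.sqrt (s / thetaHat)), ∫ w in Wp,
    ∫ x in Bbox α₃ α₄ C₁ s, ind (latimage (hfull s z₂ w x.1 x.2) ∩ calTs s = ∅)

/-- `F⁻_{(α₃,α₄)}(s)`. -/
def Fminus (α₃ α₄ : Zsqrtd 2) (C₁ s : ℝ) : ℝ :=
  (Real.sqrt s)⁻¹ * ∫ z₂ in Set.Ioo (-Real.sqrt (s / thetaHat)) (0:ℝ), ∫ w in Wp,
    ∫ x in Bbox α₃ α₄ C₁ s, ind (latimage (hfull s z₂ w x.1 x.2) ∩ calTs s = ∅)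

/-- `F_{(α₃,α₄)}(s)`. -/
def Ffull (α₃ α₄ : Zsqrtd 2) (C₁ s : ℝ) : ℝ :=
  (Real.sqrt s)⁻¹ *
    ∫ z₂ in Set.Ioo (-Real.sqrt (s / thetaHat)) (Real.sqrt (s / thetaHat)), ∫ w in Wp,
      ∫ x in Bbox α₃ α₄ C₁ s, ind (latimage (hfull s z₂ w x.1 x.2) ∩ calTs s = ∅)

/-- `v₁ = (α₃, α₄, σ(α₃), σ(α₄))`. -/
def vv1 (α₃ α₄ : Zsqrtd 2) : Fin 4 → ℝ := ![emb α₃, emb α₄, embc α₃, embc α₄]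

/-- `v₂ = (√2α₃, √2α₄, −√2σ(α₃), −√2σ(α₄))`. -/
def vv2 (α₃ α₄ : Zsqrtd 2) : Fin 4 → ℝ :=
  ![Real.sqrt 2 * emb α₃, Real.sqrt 2 * emb α₄,
    -(Real.sqrt 2 * embc α₃), -(Real.sqrt 2 * embc α₄)]

/-- `b₁ = (α₃, α₄, 0, 0)`. -/
def bb1 (α₃ α₄ : Zsqrtd 2) : Fin 4 → ℝ := ![emb α₃, emb α₄, 0, 0]

/-- `b₂ = (0, 0, σ(α₃), σ(α₄))`. -/
def bb2 (α₃ α₄ : Zsqrtd 2) : Fin 4 → ℝ := ![0, 0, embc α₃, embc α₄]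

/-- The subgrid `𝓛_v = v + ℤv₁ + ℤv₂`. -/
def Lv (α₃ α₄ : Zsqrtd 2) (v : Fin 4 → ℝ) : Set (Fin 4 → ℝ) :=
  {u | ∃ m n : ℤ, u = v + (m:ℝ) • vv1 α₃ α₄ + (n:ℝ) • vv2 α₃ α₄}

/-- The filled plane `Π_v = v + ℝb₁ + ℝb₂`. -/
def Piv (α₃ α₄ : Zsqrtd 2) (v : Fin 4 → ℝ) : Set (Fin 4 → ℝ) :=
  {u | ∃ c₁ c₂ : ℝ, u = v + c₁ • bb1 α₃ α₄ + c₂ • bb2 α₃ α₄}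

/-- `d(s) = θ̂^{−1/2}λ^{−2r}s^{1/2}`. -/
def ds (s : ℝ) : ℝ := lam ^ (-(2 * rr s)) * Real.sqrt (s / thetaHat)

/-- The explicit integral representation `Φ(s)` of the limiting gap distribution `F(s)`. -/
def Phi (s : ℝ) : ℝ :=
  (1 / ((2:ℝ) ^ ((11:ℝ)/2) * Real.sqrt thetaHat * zetaK2 * Real.sqrt s)) *
    ∫ z₂ in Set.Ioo (-Real.sqrt (s / thetaHat)) (Real.sqrt (s / thetaHat)), ∫ w in Wp,
      ∫ x in Fdom, ind (latimage (hfull s z₂ w x.1 x.2) ∩ calTs s = ∅)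


/-! If `𝓛h` misses a ball of radius `R₀`, the covering radius of `𝓛h`, of order
`max (y₁, y₂, y₁⁻¹, y₂⁻¹)`, forces `y₁y₂ > 1`, and likewise for `h'`. Writing
`(0, 1)h = (c, d)h'`, each block has norm at most that of the left side, which gives
`|N(c)| · y₁y₂y₁'y₂' ≤ 1`; hence `c = 0`, and uniqueness of polar coordinates gives `θ = θ'`.
Writing `(1, 0)h = (a, b)h'` then gives `y₁ = a y₁'`, `y₂ = σ(a) y₂'` for a totally positive unit
`a`, so `y₁/y₂ = a² y₁'/y₂'` and the bounds on both ratios leave only `a ∈ {1, λ², λ⁻²}`. In the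
open domain `a = 1`, and since `𝔉` is a fundamental domain for `𝓛'`, also `x = x'`. -/

open Real

lemma sqrt_two_sq : √2 ^ 2 = 2 := sq_sqrt zero_le_two

lemma one_lt_lam : 1 < lam := lt_add_of_pos_right 1 (sqrt_pos.2 two_pos)

lemma lam_pos : 0 < lam := zero_lt_one.trans one_lt_lam

lemma lam_sq : lam ^ 2 = 3 + 2 * √2 := by
  unfold lam; linear_combination sqrt_two_sq

lemma lam_zpow_neg_two : lam ^ (-2 : ℤ) = 3 - 2 * √2 := by
  rw [_root_.zpow_neg, zpow_ofNat, lam_sq]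
  exact inv_eq_of_mul_eq_one_right (by linear_combination (-4) * sqrt_two_sq)

lemma lam_zpow_neg_two_le_div_iff {y₁ y₂ : ℝ} (hy₁ : 0 < y₁) (hy₂ : 0 < y₂) :
    lam ^ (-2 : ℤ) ≤ y₁ / y₂ ↔ y₂ ≤ lam ^ 2 * y₁ := by
  rw [_root_.zpow_neg, zpow_ofNat, inv_le_comm₀ (pow_pos lam_pos 2) (by positivity), inv_div,
    div_le_iff₀ hy₁]

lemma emb_mul_embc (c : ℤ√2) : emb c * embc c = c.norm := by
  rw [Zsqrtd.norm_def, emb, embc]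
  push_cast
  linear_combination (-(c.im : ℝ) ^ 2) * sqrt_two_sq

lemma emb_add_embc (c : ℤ√2) : emb c + embc c = 2 * c.re := by
  rw [emb, embc]; ring

lemma emb_sub_embc (c : ℤ√2) : emb c - embc c = 2 * √2 * c.im := by
  rw [emb, embc]; ring

@[simp] lemma emb_zero : emb 0 = 0 := by simp [emb]
@[simp] lemma embc_zero : embc 0 = 0 := by simp [embc]
@[simp] lemma emb_one : emb 1 = 1 := by simp [emb]
@[simp] lemma embc_one : embc 1 = 1 := by simp [embc]

lemma two_ne_mul_self (n : ℤ) : (2 : ℤ) ≠ n * n := by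
  intro h
  have : n ≤ 1 := by nlinarith
  have : -1 ≤ n := by nlinarith
  interval_cases n <;> omega

lemma eq_zero_of_sq_emb_mul_le_one {c : ℤ√2} {a b : ℝ} (hab : 1 < a * b)
    (ha : (emb c * a) ^ 2 ≤ 1) (hb : (embc c * b) ^ 2 ≤ 1) : c = 0 := by
  have hprod : (c.norm : ℝ) ^ 2 * (a * b) ^ 2 ≤ 1 := by
    rw [← emb_mul_embc]
    calc (emb c * embc c) ^ 2 * (a * b) ^ 2 = (emb c * a) ^ 2 * (embc c * b) ^ 2 := by ring
      _ ≤ 1 * 1 := by gcongr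
      _ = 1 := one_mul 1
  have hlt : (c.norm : ℝ) ^ 2 < 1 := by nlinarith
  have : c.norm = 0 := by
    have : c.norm ^ 2 < 1 := by exact_mod_cast hlt
    nlinarith
  exact (Zsqrtd.norm_eq_zero two_ne_mul_self c).mp this

lemma exists_emb_embc_near (A B : ℝ) :
    ∃ β : ℤ√2, |emb β - A| ≤ 5 / 4 ∧ |embc β - B| ≤ 5 / 4 := by
  set u := (A + B) / 2
  set v := (A - B) / (2 * √2)
  have hs : 0 < √2 := by positivity
  have hs' : √2 < 3 / 2 := by nlinarith [sqrt_two_sq]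
  have hu : |(round u : ℝ) - u| ≤ 1 / 2 := abs_sub_comm u _ ▸ abs_sub_round u
  have hv : |(round v : ℝ) - v| ≤ 1 / 2 := abs_sub_comm v _ ▸ abs_sub_round v
  have key : ∀ s : ℝ, |s| = 1 → |(round u - u) + s * (round v - v) * √2| ≤ 5 / 4 := by
    intro s hs1
    calc |(round u - u) + s * (round v - v) * √2|
        ≤ |(round u : ℝ) - u| + |s| * |(round v : ℝ) - v| * √2 := by
          grw [abs_add_le, abs_mul, abs_mul, abs_of_pos hs]
      _ ≤ 1 / 2 + 1 * (1 / 2) * (3 / 2) := by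
          rw [hs1]; gcongr
      _ ≤ 5 / 4 := by norm_num
  refine ⟨⟨round u, round v⟩, ?_, ?_⟩
  · convert key 1 (by simp) using 2
    simp only [emb, u, v]; field_simp; ring
  · convert key (-1) (by simp) using 2
    simp only [embc, u, v]; field_simp; ring

lemma mul2_kmat (p : ℝ × ℝ) (θ : ℝ) :
    mul2 p (kmat θ) = (p.1 * cos θ + p.2 * sin θ, -(p.1 * sin θ) + p.2 * cos θ) := by
  simp [mul2, kmat]

lemma mul2_kmat_neg (p : ℝ × ℝ) (θ : ℝ) : mul2 (mul2 p (kmat θ)) (kmat (-θ)) = p := by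
  simp only [mul2_kmat, cos_neg, sin_neg]
  ext
  · linear_combination p.1 * sin_sq_add_cos_sq θ
  · linear_combination p.2 * sin_sq_add_cos_sq θ

lemma mul2_kmat_injective (θ : ℝ) : Function.Injective (mul2 · (kmat θ)) :=
  Function.LeftInverse.injective (g := (mul2 · (kmat (-θ)))) (mul2_kmat_neg · θ)

lemma normSq_mul2_kmat (p : ℝ × ℝ) (θ : ℝ) :
    (mul2 p (kmat θ)).1 ^ 2 + (mul2 p (kmat θ)).2 ^ 2 = p.1 ^ 2 + p.2 ^ 2 := by
  simp only [mul2_kmat]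
  linear_combination (p.1 ^ 2 + p.2 ^ 2) * sin_sq_add_cos_sq θ

lemma distSq_mul2_kmat (p q : ℝ × ℝ) (θ : ℝ) :
    ((mul2 p (kmat θ)).1 - q.1) ^ 2 + ((mul2 p (kmat θ)).2 - q.2) ^ 2
      = (p.1 - (mul2 q (kmat (-θ))).1) ^ 2 + (p.2 - (mul2 q (kmat (-θ))).2) ^ 2 := by
  simp only [mul2_kmat, cos_neg, sin_neg]
  linear_combination
    (p.1 ^ 2 + p.2 ^ 2 - q.1 ^ 2 - q.2 ^ 2) * sin_sq_add_cos_sq θ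

/-- A negative `c'` would force `sin θ = sin θ' = 0`, i.e. `θ = θ' = 0`, and then the cosines
disagree. -/
lemma eq_of_mul2_zero_kmat_eq {c c' θ θ' : ℝ} (hc : 0 < c) (hθ : θ ∈ Ico 0 π)
    (hθ' : θ' ∈ Ico 0 π) (h : mul2 (0, c) (kmat θ) = mul2 (0, c') (kmat θ')) :
    θ = θ' ∧ c = c' := by
  simp only [mul2_kmat, zero_mul, zero_add, neg_zero, Prod.mk.injEq] at h
  obtain ⟨hsin, hcos⟩ := h
  have hsq : c * c = c' * c' := by
    linear_combination (c * sin θ + c' * sin θ') * hsin + (c * cos θ + c' * cos θ') * hcos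
      - c ^ 2 * sin_sq_add_cos_sq θ + c' ^ 2 * sin_sq_add_cos_sq θ'
  rcases mul_self_eq_mul_self_iff.mp hsq with rfl | rfl
  · have hcos' : cos θ = cos θ' := mul_left_cancel₀ hc.ne' hcos
    exact ⟨injOn_cos (Ico_subset_Icc_self hθ) (Ico_subset_Icc_self hθ') hcos', rfl⟩
  · have hs := sin_nonneg_of_nonneg_of_le_pi hθ.1 hθ.2.le
    have hs' := sin_nonneg_of_nonneg_of_le_pi hθ'.1 hθ'.2.le
    have zero_of_sin_eq_zero : ∀ φ ∈ Ico 0 π, sin φ = 0 → φ = 0 := fun φ hφ =>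
      (sin_eq_zero_iff_of_lt_of_lt (by linarith [hφ.1, pi_pos]) hφ.2).mp
    have h0 := zero_of_sin_eq_zero θ hθ (by nlinarith)
    have h0' := zero_of_sin_eq_zero θ' hθ' (by nlinarith)
    subst h0 h0'
    simp only [cos_zero, mul_one] at hcos
    linarith

lemma mul2_nmat_amat_kmat (e f x y θ : ℝ) :
    mul2 (e, f) (nmat x * amat y * kmat θ) = mul2 (e * y, (e * x + f) * y⁻¹) (kmat θ) := by
  simp only [mul2, nmat, amat, kmat, Matrix.mul_fin_two, Matrix.of_apply, Matrix.cons_val',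
    Matrix.cons_val_zero, Matrix.cons_val_one, Matrix.empty_val', Matrix.cons_val_fin_one]
  ext <;> ring

lemma vecMul_bd_fst (v : Fin 4 → ℝ) (A B : Matrix (Fin 2) (Fin 2) ℝ) :
    (vecMul v (bd A B) 0, vecMul v (bd A B) 1) = mul2 (v 0, v 1) A := by
  simp [mul2, bd, vecMul, dotProduct, Fin.sum_univ_four]

lemma vecMul_bd_snd (v : Fin 4 → ℝ) (A B : Matrix (Fin 2) (Fin 2) ℝ) :
    (vecMul v (bd A B) 2, vecMul v (bd A B) 3) = mul2 (v 2, v 3) B := by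
  simp [mul2, bd, vecMul, dotProduct, Fin.sum_univ_four]

lemma latvec_hmat_fst (β₁ β₂ : ℤ√2) (x₁ x₂ y₁ y₂ θ₁ θ₂ : ℝ) :
    (vecMul (latvec β₁ β₂) (hmat x₁ x₂ y₁ y₂ θ₁ θ₂) 0,
      vecMul (latvec β₁ β₂) (hmat x₁ x₂ y₁ y₂ θ₁ θ₂) 1)
      = mul2 (emb β₁ * y₁, (emb β₁ * x₁ + emb β₂) * y₁⁻¹) (kmat θ₁) := by
  rw [hmat, vecMul_bd_fst, ← mul2_nmat_amat_kmat]; rfl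

lemma latvec_hmat_snd (β₁ β₂ : ℤ√2) (x₁ x₂ y₁ y₂ θ₁ θ₂ : ℝ) :
    (vecMul (latvec β₁ β₂) (hmat x₁ x₂ y₁ y₂ θ₁ θ₂) 2,
      vecMul (latvec β₁ β₂) (hmat x₁ x₂ y₁ y₂ θ₁ θ₂) 3)
      = mul2 (embc β₁ * y₂, (embc β₁ * x₂ + embc β₂) * y₂⁻¹) (kmat θ₂) := by
  rw [hmat, vecMul_bd_snd, ← mul2_nmat_amat_kmat]; rfl

lemma exists_latvec_eq_of_latimage_eq {h h' : Matrix (Fin 4) (Fin 4) ℝ}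
    (hlat : latimage h = latimage h') (β₁ β₂ : ℤ√2) :
    ∃ γ₁ γ₂ : ℤ√2, vecMul (latvec β₁ β₂) h = vecMul (latvec γ₁ γ₂) h' := by
  have hmem : vecMul (latvec β₁ β₂) h ∈ latimage h' := hlat ▸ ⟨_, ⟨β₁, β₂, rfl⟩, rfl⟩
  obtain ⟨_, ⟨γ₁, γ₂, rfl⟩, hγ⟩ := hmem
  exact ⟨γ₁, γ₂, hγ.symm⟩

lemma sq_add_sq_le_of_abs_le {e f x y : ℝ} (q : ℝ × ℝ) (hy : 0 < y)
    (he : |e - q.1 / y| ≤ 5 / 4) (hf : |f - (q.2 * y - e * x)| ≤ 5 / 4) :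
    (e * y - q.1) ^ 2 + ((e * x + f) * y⁻¹ - q.2) ^ 2 ≤ 2 * (y ^ 2 + y⁻¹ ^ 2) := by
  have h₁ : e * y - q.1 = (e - q.1 / y) * y := by field_simp
  have h₂ : (e * x + f) * y⁻¹ - q.2 = (f - (q.2 * y - e * x)) * y⁻¹ := by field_simp; ring
  have he' : (e - q.1 / y) ^ 2 ≤ 2 := by nlinarith [sq_abs (e - q.1 / y), abs_nonneg (e - q.1 / y)]
  have hf' : (f - (q.2 * y - e * x)) ^ 2 ≤ 2 := by
    nlinarith [sq_abs (f - (q.2 * y - e * x)), abs_nonneg (f - (q.2 * y - e * x))]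
  rw [h₁, h₂, mul_pow, mul_pow]
  nlinarith [sq_nonneg y, sq_nonneg y⁻¹]

/-- Round the first coordinates in `ℤ[√2]`, jointly in both embeddings, then the second ones. -/
lemma exists_mem_latimage_enorm4_sub_le (x₁ x₂ θ₁ θ₂ : ℝ) {y₁ y₂ : ℝ} (hy₁ : 0 < y₁)
    (hy₂ : 0 < y₂) (p : Fin 4 → ℝ) :
    ∃ v ∈ latimage (hmat x₁ x₂ y₁ y₂ θ₁ θ₂),
      enorm4 (v - p) ≤ √(2 * (y₁ ^ 2 + y₁⁻¹ ^ 2) + 2 * (y₂ ^ 2 + y₂⁻¹ ^ 2)) := by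
  set q₁ := mul2 (p 0, p 1) (kmat (-θ₁))
  set q₂ := mul2 (p 2, p 3) (kmat (-θ₂))
  obtain ⟨β₁, hβ₁, hβ₁'⟩ := exists_emb_embc_near (q₁.1 / y₁) (q₂.1 / y₂)
  obtain ⟨β₂, hβ₂, hβ₂'⟩ :=
    exists_emb_embc_near (q₁.2 * y₁ - emb β₁ * x₁) (q₂.2 * y₂ - embc β₁ * x₂)
  refine ⟨_, ⟨_, ⟨β₁, β₂, rfl⟩, rfl⟩, ?_⟩
  have h₁ := distSq_mul2_kmat (emb β₁ * y₁, (emb β₁ * x₁ + emb β₂) * y₁⁻¹) (p 0, p 1) θ₁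
  have h₂ := distSq_mul2_kmat (embc β₁ * y₂, (embc β₁ * x₂ + embc β₂) * y₂⁻¹) (p 2, p 3) θ₂
  rw [← latvec_hmat_fst β₁ β₂ x₁ x₂ y₁ y₂ θ₁ θ₂] at h₁
  rw [← latvec_hmat_snd β₁ β₂ x₁ x₂ y₁ y₂ θ₁ θ₂] at h₂
  have b₁ := sq_add_sq_le_of_abs_le q₁ hy₁ hβ₁ hβ₂
  have b₂ := sq_add_sq_le_of_abs_le q₂ hy₂ hβ₁' hβ₂'
  rw [enorm4, Fin.sum_univ_four]
  apply sqrt_le_sqrt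
  simp only [Pi.sub_apply] at h₁ h₂ ⊢
  linarith

lemma one_lt_mul_of_forall_le_enorm4_sub {t x₁ x₂ y₁ y₂ θ₁ θ₂ R : ℝ} {p : Fin 4 → ℝ}
    (ht : 0 < t) (hy₁ : 0 < y₁) (hy₂ : 0 < y₂) (hyt : t ≤ y₁ * y₂)
    (hρ₁ : lam ^ (-2 : ℤ) ≤ y₁ / y₂) (hρ₂ : y₁ / y₂ ≤ lam ^ 2)
    (hR : √(4 * lam ^ 2 * (1 + t⁻¹)) < R)
    (hfar : ∀ v ∈ latimage (hmat x₁ x₂ y₁ y₂ θ₁ θ₂), R ≤ enorm4 (v - p)) :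
    1 < y₁ * y₂ := by
  by_contra! hsmall
  obtain ⟨v, hv, hvp⟩ := exists_mem_latimage_enorm4_sub_le x₁ x₂ θ₁ θ₂ hy₁ hy₂ p
  have hρ₁' := (lam_zpow_neg_two_le_div_iff hy₁ hy₂).mp hρ₁
  have hρ₂' := (div_le_iff₀ hy₂).mp hρ₂
  have hl : 0 < lam ^ 2 := pow_pos lam_pos 2
  have hsq₁ : y₁ ^ 2 ≤ lam ^ 2 := by nlinarith
  have hsq₂ : y₂ ^ 2 ≤ lam ^ 2 := by nlinarith
  have hinv₁ : y₁⁻¹ ^ 2 ≤ lam ^ 2 * t⁻¹ := by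
    rw [inv_pow, ← div_eq_mul_inv, inv_le_iff_one_le_mul₀ (by positivity),
      div_mul_eq_mul_div, one_le_div ht]
    nlinarith
  have hinv₂ : y₂⁻¹ ^ 2 ≤ lam ^ 2 * t⁻¹ := by
    rw [inv_pow, ← div_eq_mul_inv, inv_le_iff_one_le_mul₀ (by positivity),
      div_mul_eq_mul_div, one_le_div ht]
    nlinarith
  have hcov : √(2 * (y₁ ^ 2 + y₁⁻¹ ^ 2) + 2 * (y₂ ^ 2 + y₂⁻¹ ^ 2)) ≤ √(4 * lam ^ 2 * (1 + t⁻¹)) :=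
    sqrt_le_sqrt (by linarith)
  linarith [hfar v hv]

lemma sq_mul_mul_le_one_of_mul2_kmat_eq {e f y y' θ θ' : ℝ} (hy : 0 < y)
    (h : mul2 (0, y⁻¹) (kmat θ) = mul2 (e * y', f) (kmat θ')) : (e * (y * y')) ^ 2 ≤ 1 := by
  have hnorm := normSq_mul2_kmat (0, y⁻¹) θ
  rw [h, normSq_mul2_kmat] at hnorm
  have hle : (e * y') ^ 2 ≤ y⁻¹ ^ 2 := by simp only at hnorm; nlinarith [sq_nonneg f]
  calc (e * (y * y')) ^ 2 = (e * y') ^ 2 * y ^ 2 := by ring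
    _ ≤ y⁻¹ ^ 2 * y ^ 2 := by gcongr
    _ = 1 := by rw [← mul_pow, inv_mul_cancel₀ hy.ne', one_pow]

lemma theta_eq_of_latimage_eq {x₁ x₂ y₁ y₂ θ₁ θ₂ x₁' x₂' y₁' y₂' θ₁' θ₂' : ℝ}
    (hy₁ : 0 < y₁) (hy₂ : 0 < y₂) (hy₁' : 0 < y₁') (hy₂' : 0 < y₂')
    (hθ₁ : θ₁ ∈ Ico 0 π) (hθ₂ : θ₂ ∈ Ico 0 π) (hθ₁' : θ₁' ∈ Ico 0 π) (hθ₂' : θ₂' ∈ Ico 0 π)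
    (hbig : 1 < y₁ * y₁' * (y₂ * y₂'))
    (hlat : latimage (hmat x₁ x₂ y₁ y₂ θ₁ θ₂) = latimage (hmat x₁' x₂' y₁' y₂' θ₁' θ₂')) :
    θ₁ = θ₁' ∧ θ₂ = θ₂' ∧ ∃ d : ℤ√2, emb d * y₁ = y₁' ∧ embc d * y₂ = y₂' := by
  obtain ⟨c, d, hcd⟩ := exists_latvec_eq_of_latimage_eq hlat 0 1
  have e₁ := latvec_hmat_fst 0 1 x₁ x₂ y₁ y₂ θ₁ θ₂
  have e₂ := latvec_hmat_snd 0 1 x₁ x₂ y₁ y₂ θ₁ θ₂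
  rw [hcd, latvec_hmat_fst] at e₁
  rw [hcd, latvec_hmat_snd] at e₂
  simp only [emb_zero, emb_one, embc_zero, embc_one, zero_mul, zero_add, one_mul] at e₁ e₂
  obtain rfl : c = 0 := eq_zero_of_sq_emb_mul_le_one hbig
    (sq_mul_mul_le_one_of_mul2_kmat_eq hy₁ e₁.symm)
    (sq_mul_mul_le_one_of_mul2_kmat_eq hy₂ e₂.symm)
  simp only [emb_zero, embc_zero, zero_mul, zero_add] at e₁ e₂
  obtain ⟨rfl, h₁⟩ := eq_of_mul2_zero_kmat_eq (inv_pos.2 hy₁) hθ₁ hθ₁' e₁.symm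
  obtain ⟨rfl, h₂⟩ := eq_of_mul2_zero_kmat_eq (inv_pos.2 hy₂) hθ₂ hθ₂' e₂.symm
  refine ⟨rfl, rfl, d, ?_, ?_⟩
  · field_simp at h₁; linarith
  · field_simp at h₂; linarith

lemma exists_of_latimage_eq {x₁ x₂ y₁ y₂ θ₁ θ₂ x₁' x₂' y₁' y₂' : ℝ}
    (hlat : latimage (hmat x₁ x₂ y₁ y₂ θ₁ θ₂) = latimage (hmat x₁' x₂' y₁' y₂' θ₁ θ₂)) :
    ∃ a b : ℤ√2, emb a * y₁' = y₁ ∧ embc a * y₂' = y₂ ∧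
      (emb a * x₁' + emb b) * y₁'⁻¹ = x₁ * y₁⁻¹ ∧
      (embc a * x₂' + embc b) * y₂'⁻¹ = x₂ * y₂⁻¹ := by
  obtain ⟨a, b, hab⟩ := exists_latvec_eq_of_latimage_eq hlat 1 0
  have e₁ := latvec_hmat_fst 1 0 x₁ x₂ y₁ y₂ θ₁ θ₂
  have e₂ := latvec_hmat_snd 1 0 x₁ x₂ y₁ y₂ θ₁ θ₂
  rw [hab, latvec_hmat_fst] at e₁
  rw [hab, latvec_hmat_snd] at e₂
  simp only [emb_zero, emb_one, embc_zero, embc_one, one_mul, add_zero] at e₁ e₂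
  obtain ⟨h₁, h₁'⟩ := Prod.mk.inj (mul2_kmat_injective θ₁ e₁)
  obtain ⟨h₂, h₂'⟩ := Prod.mk.inj (mul2_kmat_injective θ₂ e₂)
  exact ⟨a, b, h₁, h₂, h₁', h₂'⟩

lemma norm_eq_one_of_scales {a d : ℤ√2} {y₁ y₂ y₁' y₂' : ℝ} (hy₁ : 0 < y₁) (hy₂ : 0 < y₂)
    (hy₁' : 0 < y₁') (hy₂' : 0 < y₂') (ha₁ : emb a * y₁' = y₁) (ha₂ : embc a * y₂' = y₂)
    (hd₁ : emb d * y₁ = y₁') (hd₂ : embc d * y₂ = y₂') : a.norm = 1 := by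
  have h₁ : emb a * emb d = 1 := by
    apply mul_right_cancel₀ hy₁.ne'
    linear_combination emb a * hd₁ + ha₁
  have h₂ : embc a * embc d = 1 := by
    apply mul_right_cancel₀ hy₂.ne'
    linear_combination embc a * hd₂ + ha₂
  have hprod : a.norm * d.norm = 1 := by
    have : (a.norm : ℝ) * d.norm = 1 := by
      rw [← emb_mul_embc, ← emb_mul_embc]
      linear_combination embc a * embc d * h₁ + h₂
    exact_mod_cast this
  have hpos : 0 < a.norm := by
    have : (0 : ℝ) < a.norm := by
      rw [← emb_mul_embc]
      exact mul_pos (pos_of_mul_pos_left (ha₁ ▸ hy₁) hy₁'.le)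
        (pos_of_mul_pos_left (ha₂ ▸ hy₂) hy₂'.le)
    exact_mod_cast this
  rcases Int.eq_one_or_neg_one_of_mul_eq_one hprod with h | h
  · exact h
  · omega

lemma emb_mul_embc_eq_one {a : ℤ√2} (hn : a.norm = 1) : emb a * embc a = 1 := by
  rw [emb_mul_embc, hn, Int.cast_one]

lemma div_eq_emb_sq_mul {a : ℤ√2} {y₁ y₂ y₁' y₂' : ℝ} (hn : a.norm = 1)
    (ha₁ : emb a * y₁' = y₁) (ha₂ : embc a * y₂' = y₂) : y₁ / y₂ = emb a ^ 2 * (y₁' / y₂') := by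
  rw [← ha₁, ← ha₂, eq_inv_of_mul_eq_one_right (emb_mul_embc_eq_one hn), mul_div_mul_comm,
    div_inv_eq_mul]
  ring

lemma lam_zpow_neg_two_mul_lam_sq : lam ^ (-2 : ℤ) * lam ^ 2 = 1 := by
  rw [lam_zpow_neg_two, lam_sq]; linear_combination (-4) * sqrt_two_sq

lemma mem_Icc_of_eq_sq_mul {u ρ ρ' : ℝ} (hu : 0 < u) (h : ρ = u ^ 2 * ρ')
    (hρ : ρ ∈ Icc (lam ^ (-2 : ℤ)) (lam ^ 2)) (hρ' : ρ' ∈ Icc (lam ^ (-2 : ℤ)) (lam ^ 2)) :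
    u ∈ Icc (lam ^ (-2 : ℤ)) (lam ^ 2) := by
  have hinv := lam_zpow_neg_two_mul_lam_sq
  have hL : 0 < lam ^ 2 := pow_pos lam_pos 2
  have hℓ : 0 < lam ^ (-2 : ℤ) := zpow_pos lam_pos _
  subst h
  obtain ⟨h₁, h₂⟩ := hρ
  obtain ⟨h₁', h₂'⟩ := hρ'
  constructor
  · have : (lam ^ (-2 : ℤ)) ^ 2 ≤ u ^ 2 := by
      nlinarith [mul_le_mul_of_nonneg_left h₂' (sq_nonneg u)]
    exact (pow_le_pow_iff_left₀ hℓ.le hu.le two_ne_zero).mp this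
  · have : u ^ 2 ≤ (lam ^ 2) ^ 2 := by
      nlinarith [mul_le_mul_of_nonneg_left h₁' (sq_nonneg u)]
    exact (pow_le_pow_iff_left₀ hu.le hL.le two_ne_zero).mp this

/-- `a.re = (emb a + embc a) / 2` and `a.im = (emb a - embc a) / (2√2)` are confined to a small
box because `embc a = (emb a)⁻¹` lies in the same interval as `emb a`. -/
lemma eq_one_or_eq_or_eq_of_norm_eq_one {a : ℤ√2} (hn : a.norm = 1) (ha : 0 < emb a)
    (h : emb a ∈ Icc (lam ^ (-2 : ℤ)) (lam ^ 2)) : a = 1 ∨ a = ⟨3, 2⟩ ∨ a = ⟨3, -2⟩ := by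
  have hprod := emb_mul_embc_eq_one hn
  rw [lam_zpow_neg_two, lam_sq] at h
  obtain ⟨h₁, h₂⟩ := h
  have hs := sqrt_two_sq
  have hc : 0 < embc a := pos_of_mul_pos_right (hprod ▸ one_pos) ha.le
  have hc₁ : 3 - 2 * √2 ≤ embc a := by nlinarith [mul_le_mul_of_nonneg_right h₂ hc.le]
  have hc₂ : embc a ≤ 3 + 2 * √2 := by nlinarith [mul_le_mul_of_nonneg_right h₁ hc.le]
  have hre := emb_add_embc a
  have him := emb_sub_embc a
  have hre₁ : 1 ≤ a.re := by
    have : 2 ≤ emb a + embc a := by nlinarith [sq_nonneg (emb a - 1)]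
    have : (1 : ℝ) ≤ a.re := by linarith
    exact_mod_cast this
  have hre₂ : a.re ≤ 5 := by
    have : (a.re : ℝ) < 6 := by nlinarith
    have : a.re < 6 := by exact_mod_cast this
    omega
  have him₁ : -2 ≤ a.im := by
    have : (-3 : ℝ) < a.im := by nlinarith
    have : -3 < a.im := by exact_mod_cast this
    omega
  have him₂ : a.im ≤ 2 := by
    have : (a.im : ℝ) < 3 := by nlinarith
    have : a.im < 3 := by exact_mod_cast this
    omega
  obtain ⟨x, y⟩ := a
  rw [Zsqrtd.norm_def] at hn
  simp only at hn hre₁ hre₂ him₁ him₂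
  simp only [Zsqrtd.ext_iff, Zsqrtd.re_one, Zsqrtd.im_one]
  interval_cases x <;> interval_cases y <;> omega

lemma exists_emb_eq_lam_zpow {a : ℤ√2} (hn : a.norm = 1) (ha : 0 < emb a)
    (h : emb a ∈ Icc (lam ^ (-2 : ℤ)) (lam ^ 2)) :
    ∃ r : ℤ, (r = -1 ∨ r = 0 ∨ r = 1) ∧ emb a = lam ^ (2 * r) := by
  rcases eq_one_or_eq_or_eq_of_norm_eq_one hn ha h with rfl | rfl | rfl
  · exact ⟨0, by simp⟩
  · refine ⟨1, by simp, ?_⟩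
    rw [mul_one, zpow_ofNat, lam_sq, emb]; norm_num
  · refine ⟨-1, by simp, ?_⟩
    rw [mul_neg_one, lam_zpow_neg_two, emb]; norm_num; ring

lemma eq_zero_of_lam_zpow_mul_mem_Ioo {r : ℤ} {ρ : ℝ} (hρ : ρ ∈ Ioo (lam ^ (-2 : ℤ)) (lam ^ 2))
    (h : lam ^ (4 * r) * ρ ∈ Ioo (lam ^ (-2 : ℤ)) (lam ^ 2)) : r = 0 := by
  rw [← zpow_ofNat] at hρ h
  have hpos : 0 < lam ^ (4 * r) := zpow_pos lam_pos _
  have hlt : lam ^ (4 * r + -2) < lam ^ ((2 : ℕ) : ℤ) := by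
    rw [zpow_add₀ lam_pos.ne']
    exact (mul_lt_mul_of_pos_left hρ.1 hpos).trans h.2
  have hgt : lam ^ (-2 : ℤ) < lam ^ (4 * r + 2) := by
    rw [zpow_add₀ lam_pos.ne']
    exact h.1.trans (mul_lt_mul_of_pos_left hρ.2 hpos)
  rw [zpow_lt_zpow_iff_right₀ one_lt_lam] at hlt hgt
  omega

lemma eq_of_add_emb_mem_Fdom {x₁ x₂ x₁' x₂' : ℝ} {b : ℤ√2} (hx : (x₁, x₂) ∈ Fdom)
    (hx' : (x₁', x₂') ∈ Fdom) (h₁ : x₁' + emb b = x₁) (h₂ : x₂' + embc b = x₂) :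
    x₁ = x₁' ∧ x₂ = x₂' := by
  obtain ⟨r₁, hr₁, r₂, hr₂, hx⟩ := hx
  obtain ⟨r₁', hr₁', r₂', hr₂', hx'⟩ := hx'
  simp only [Prod.mk.injEq] at hx hx'
  have hre : (b.re : ℝ) = r₁ - r₁' := by linarith [emb_add_embc b]
  have him : (b.im : ℝ) = r₂ - r₂' := by
    have hs : (2 * √2) ≠ 0 := by positivity
    apply mul_left_cancel₀ hs
    linarith [emb_sub_embc b]
  have hre0 : b.re = 0 := Int.abs_lt_one_iff.mp <| by
    have : |(b.re : ℝ)| < 1 := by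
      rw [hre, abs_lt]; constructor <;> linarith [hr₁.1, hr₁.2, hr₁'.1, hr₁'.2]
    exact_mod_cast this
  have him0 : b.im = 0 := Int.abs_lt_one_iff.mp <| by
    have : |(b.im : ℝ)| < 1 := by
      rw [him, abs_lt]; constructor <;> linarith [hr₂.1, hr₂.2, hr₂'.1, hr₂'.2]
    exact_mod_cast this
  simp only [emb, embc, hre0, him0, Int.cast_zero, zero_mul, add_zero, sub_zero] at h₁ h₂
  exact ⟨h₁.symm, h₂.symm⟩

lemma hmat_eq_of_emb_eq_one {a b : ℤ√2} {x₁ x₂ y₁ y₂ x₁' x₂' y₁' y₂' θ₁ θ₂ : ℝ}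
    (hx : (x₁, x₂) ∈ Fdom) (hx' : (x₁', x₂') ∈ Fdom) (hy₁ : 0 < y₁) (hy₂ : 0 < y₂)
    (hn : a.norm = 1) (he : emb a = 1) (ha₁ : emb a * y₁' = y₁) (ha₂ : embc a * y₂' = y₂)
    (hb₁ : (emb a * x₁' + emb b) * y₁'⁻¹ = x₁ * y₁⁻¹)
    (hb₂ : (embc a * x₂' + embc b) * y₂'⁻¹ = x₂ * y₂⁻¹) :
    hmat x₁ x₂ y₁ y₂ θ₁ θ₂ = hmat x₁' x₂' y₁' y₂' θ₁ θ₂ := by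
  have he' : embc a = 1 := by simpa [he] using emb_mul_embc_eq_one hn
  rw [he, one_mul] at ha₁ hb₁
  rw [he', one_mul] at ha₂ hb₂
  subst ha₁ ha₂
  obtain ⟨rfl, rfl⟩ := eq_of_add_emb_mem_Fdom hx hx'
    (mul_right_cancel₀ (inv_ne_zero hy₁.ne') hb₁) (mul_right_cancel₀ (inv_ne_zero hy₂.ne') hb₂)
  rfl

theorem stmt3_general (t : ℝ) (ht : 0 < t) :
    ∃ R₀ > (0:ℝ), ∀ x₁ x₂ y₁ y₂ θ₁ θ₂ x₁' x₂' y₁' y₂' θ₁' θ₂' : ℝ,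
      (x₁, x₂) ∈ Fdom → 0 < y₁ → 0 < y₂ → t ≤ y₁ * y₂ →
      lam ^ (-2:ℤ) ≤ y₁ / y₂ → y₁ / y₂ ≤ lam ^ 2 →
      θ₁ ∈ Set.Ico 0 Real.pi → θ₂ ∈ Set.Ico 0 Real.pi →
      (x₁', x₂') ∈ Fdom → 0 < y₁' → 0 < y₂' → t ≤ y₁' * y₂' →
      lam ^ (-2:ℤ) ≤ y₁' / y₂' → y₁' / y₂' ≤ lam ^ 2 →
      θ₁' ∈ Set.Ico 0 Real.pi → θ₂' ∈ Set.Ico 0 Real.pi →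
      latimage (hmat x₁ x₂ y₁ y₂ θ₁ θ₂) = latimage (hmat x₁' x₂' y₁' y₂' θ₁' θ₂') →
      (∃ (p : Fin 4 → ℝ) (R : ℝ), R₀ ≤ R ∧
        ∀ v ∈ latimage (hmat x₁ x₂ y₁ y₂ θ₁ θ₂), R ≤ enorm4 (v - p)) →
      θ₁ = θ₁' ∧ θ₂ = θ₂' ∧
      (∃ r : ℤ, (r = -1 ∨ r = 0 ∨ r = 1) ∧ y₁ / y₂ = lam ^ (4*r) * (y₁' / y₂')) ∧
      ((lam ^ (-2:ℤ) < y₁ / y₂ ∧ y₁ / y₂ < lam ^ 2 ∧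
        lam ^ (-2:ℤ) < y₁' / y₂' ∧ y₁' / y₂' < lam ^ 2) →
        hmat x₁ x₂ y₁ y₂ θ₁ θ₂ = hmat x₁' x₂' y₁' y₂' θ₁' θ₂') := by
  refine ⟨√(4 * lam ^ 2 * (1 + t⁻¹)) + 1, by positivity, ?_⟩
  intro x₁ x₂ y₁ y₂ θ₁ θ₂ x₁' x₂' y₁' y₂' θ₁' θ₂' hx hy₁ hy₂ hyt hρ₁ hρ₂ hθ₁ hθ₂
    hx' hy₁' hy₂' hyt' hρ₁' hρ₂' hθ₁' hθ₂' hlat ⟨p, R, hR, hfar⟩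
  have hbig := one_lt_mul_of_forall_le_enorm4_sub ht hy₁ hy₂ hyt hρ₁ hρ₂ (by linarith) hfar
  have hbig' := one_lt_mul_of_forall_le_enorm4_sub ht hy₁' hy₂' hyt' hρ₁' hρ₂' (by linarith)
    (hlat ▸ hfar)
  obtain ⟨rfl, rfl, d, hd₁, hd₂⟩ := theta_eq_of_latimage_eq hy₁ hy₂ hy₁' hy₂' hθ₁ hθ₂ hθ₁' hθ₂'
    (by nlinarith) hlat
  obtain ⟨a, b, ha₁, ha₂, hb₁, hb₂⟩ := exists_of_latimage_eq hlat
  have hn := norm_eq_one_of_scales hy₁ hy₂ hy₁' hy₂' ha₁ ha₂ hd₁ hd₂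
  have ha : 0 < emb a := pos_of_mul_pos_left (ha₁ ▸ hy₁) hy₁'.le
  have hρ := div_eq_emb_sq_mul hn ha₁ ha₂
  obtain ⟨r, hr, he⟩ :=
    exists_emb_eq_lam_zpow hn ha (mem_Icc_of_eq_sq_mul ha hρ ⟨hρ₁, hρ₂⟩ ⟨hρ₁', hρ₂'⟩)
  have hρr : y₁ / y₂ = lam ^ (4 * r) * (y₁' / y₂') := by
    rw [hρ, he, ← zpow_natCast, ← _root_.zpow_mul]; ring_nf
  refine ⟨rfl, rfl, ⟨r, hr, hρr⟩, fun ⟨h₁, h₂, h₁', h₂'⟩ => ?_⟩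
  obtain rfl : r = 0 := eq_zero_of_lam_zpow_mul_mem_Ioo ⟨h₁', h₂'⟩ (hρr ▸ ⟨h₁, h₂⟩)
  exact hmat_eq_of_emb_eq_one hx hx' hy₁ hy₂ hn (by simpa using he) ha₁ ha₂ hb₁ hb₂

theorem stmt3 (t : ℝ) (ht : 0 < t)
    (hcover : ∀ h ∈ Hset, ∃ γ ∈ GammaK, γ * h ∈ Dset t) :
    ∃ R₀ > (0:ℝ), ∀ x₁ x₂ y₁ y₂ θ₁ θ₂ x₁' x₂' y₁' y₂' θ₁' θ₂' : ℝ,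
      (x₁, x₂) ∈ Fdom → 0 < y₁ → 0 < y₂ → t ≤ y₁ * y₂ →
      lam ^ (-2:ℤ) ≤ y₁ / y₂ → y₁ / y₂ ≤ lam ^ 2 →
      θ₁ ∈ Set.Ico 0 Real.pi → θ₂ ∈ Set.Ico 0 Real.pi →
      (x₁', x₂') ∈ Fdom → 0 < y₁' → 0 < y₂' → t ≤ y₁' * y₂' →
      lam ^ (-2:ℤ) ≤ y₁' / y₂' → y₁' / y₂' ≤ lam ^ 2 →
      θ₁' ∈ Set.Ico 0 Real.pi → θ₂' ∈ Set.Ico 0 Real.pi →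
      latimage (hmat x₁ x₂ y₁ y₂ θ₁ θ₂) = latimage (hmat x₁' x₂' y₁' y₂' θ₁' θ₂') →
      (∃ (p : Fin 4 → ℝ) (R : ℝ), R₀ ≤ R ∧
        ∀ v ∈ latimage (hmat x₁ x₂ y₁ y₂ θ₁ θ₂), R ≤ enorm4 (v - p)) →
      θ₁ = θ₁' ∧ θ₂ = θ₂' ∧
      (∃ r : ℤ, (r = -1 ∨ r = 0 ∨ r = 1) ∧ y₁ / y₂ = lam ^ (4*r) * (y₁' / y₂')) ∧
      ((lam ^ (-2:ℤ) < y₁ / y₂ ∧ y₁ / y₂ < lam ^ 2 ∧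
        lam ^ (-2:ℤ) < y₁' / y₂' ∧ y₁' / y₂' < lam ^ 2) →
        hmat x₁ x₂ y₁ y₂ θ₁ θ₂ = hmat x₁' x₂' y₁' y₂' θ₁' θ₂') :=
  stmt3_general t ht

end
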